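/- For the Implicit OMD iterates, the regret satisfies R_T(u) = ∑_{t=1}^T[ℓ_t(x_t) − ℓ_t(u)] ≤ ∑_{t=1}^T [B_ψ(u, x_t) − B_ψ(u, x_{t+1})]/η_t + ∑_{t=1}^T [ℓ_t(x_t) − ℓ_t(x_{t+1}) − B_ψ(x_{t+1}, x_t)/η_t] for every u ∈ V. -/

import Mathlib

open Finset

/-- The Bregman divergence of `ψ` with gradient `Dψ`. -/
noncomputable def breg {E : Type*} [NormedAddCommGroup E] [InnerProductSpace ℝ E]
    (ψ : E → ℝ) (Dψ : E → E) (x y : E) : ℝ :=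
  ψ x - ψ y - (inner ℝ (Dψ y) (x - y) : ℝ)

/-!
Each round is a proximal step: `x_{t+1}` minimises `B_ψ(·, x_t) + η_t ℓ_t` over `V`. Since the
Bregman term is differentiable with gradient `∇ψ(x_{t+1}) - ∇ψ(x_t)` and `ℓ_t` is convex, the
first-order optimality condition of this minimisation gives
`η_t (ℓ_t(x_{t+1}) - ℓ_t(u)) ≤ ⟪∇ψ(x_{t+1}) - ∇ψ(x_t), u - x_{t+1}⟫`, and the three-point identity
turns the right-hand side into `B_ψ(u, x_t) - B_ψ(u, x_{t+1}) - B_ψ(x_{t+1}, x_t)`. Dividing by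
`η_t` and summing over the rounds gives the bound, term by term.
-/

section

open InnerProductSpace Set

variable {E : Type*} [NormedAddCommGroup E] [InnerProductSpace ℝ E]

theorem breg_three_point (ψ : E → ℝ) (Dψ : E → E) (u x y : E) :
    breg ψ Dψ u x - breg ψ Dψ u y - breg ψ Dψ y x = inner ℝ (Dψ y - Dψ x) (u - y) := by
  simp only [breg, inner_sub_left, inner_sub_right]
  ring

variable [CompleteSpace E]

theorem hasGradientAt_breg_left {ψ : E → ℝ} {Dψ : E → E} {x y : E}
    (hψ : HasGradientAt ψ (Dψ y) y) :
    HasGradientAt (fun z => breg ψ Dψ z x) (Dψ y - Dψ x) y := by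
  rw [hasGradientAt_iff_hasFDerivAt] at hψ ⊢
  refine ((hψ.sub_const (ψ x)).sub ((innerSL ℝ (Dψ x)).hasFDerivAt.comp y
    ((hasFDerivAt_id y).sub_const x))).congr_fderiv ?_
  ext v
  simp

theorem HasGradientAt.hasDerivAt_add_smul {f : E → ℝ} {g p : E} (hf : HasGradientAt f g p)
    (v : E) : HasDerivAt (fun s : ℝ => f (p + s • v)) (inner ℝ g v) 0 := by
  have hline : HasDerivAt (fun s : ℝ => p + s • v) v 0 := by
    simpa using ((hasDerivAt_id (0 : ℝ)).smul_const v).const_add p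
  have hf' : HasFDerivAt f (toDual ℝ E g) (p + (0 : ℝ) • v) := by
    simpa using hf.hasFDerivAt
  exact hf'.comp_hasDerivAt 0 hline

theorem IsMinOn.sub_le_inner_of_add_convexOn {V : Set E} {h φ : E → ℝ} {g p u : E}
    (hV : Convex ℝ V) (hφ : ConvexOn ℝ V φ) (hp : p ∈ V) (hu : u ∈ V)
    (hh : HasGradientAt h g p) (hmin : IsMinOn (fun y => h y + φ y) V p) :
    φ p - φ u ≤ inner ℝ g (u - p) := by
  -- Along the segment `p + s • (u - p)`, replace `φ` by its chord, which lies above it.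
  set k : ℝ → ℝ := fun s => h (p + s • (u - p)) + s * (φ u - φ p)
  have hk : HasDerivAt k (inner ℝ g (u - p) + (φ u - φ p)) 0 :=
    (hh.hasDerivAt_add_smul (u - p)).add (hasDerivAt_mul_const _)
  have hkmin : IsMinOn k (Icc 0 1) 0 := by
    rintro s ⟨hs0, hs1⟩
    have hseg : p + s • (u - p) = (1 - s) • p + s • u := by module
    have hmin_s : h p + φ p ≤ h (p + s • (u - p)) + φ (p + s • (u - p)) :=
      hmin (hseg ▸ hV hp hu (by linarith) hs0 (by ring))
    have hchord : φ (p + s • (u - p)) ≤ (1 - s) * φ p + s * φ u := by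
      simpa [hseg, smul_eq_mul] using hφ.2 hp hu (by linarith : (0 : ℝ) ≤ 1 - s) hs0 (by ring)
    show h (p + (0 : ℝ) • (u - p)) + 0 * (φ u - φ p) ≤ k s
    simp only [zero_smul, add_zero, zero_mul, k]
    linarith
  have hcone : (1 : ℝ) ∈ posTangentConeAt (Icc (0 : ℝ) 1) 0 := by
    simpa using sub_mem_posTangentConeAt_of_segment_subset (segment_eq_Icc zero_le_one).subset
  have := hkmin.localize.hasFDerivWithinAt_nonneg hk.hasFDerivAt.hasFDerivWithinAt hcone
  simp only [ContinuousLinearMap.toSpanSingleton_apply, smul_eq_mul, one_mul] at this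
  linarith

theorem mul_sub_le_breg_of_isMinOn {V : Set E} {ψ f : E → ℝ} {Dψ : E → E} {η : ℝ}
    {x x' u : E} (hV : Convex ℝ V) (hf : ConvexOn ℝ V f) (hη : 0 ≤ η) (hx' : x' ∈ V)
    (hu : u ∈ V) (hψ : HasGradientAt ψ (Dψ x') x')
    (hmin : IsMinOn (fun y => breg ψ Dψ y x + η * f y) V x') :
    η * (f x' - f u) ≤ breg ψ Dψ u x - breg ψ Dψ u x' - breg ψ Dψ x' x := by
  rw [breg_three_point, mul_sub]
  exact IsMinOn.sub_le_inner_of_add_convexOn hV (hf.smul hη) hx' hu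
    (hasGradientAt_breg_left hψ) hmin

end

theorem iomd_regret_bound_general {d : ℕ}
    (V : Set (EuclideanSpace ℝ (Fin d)))
    (hVcv : Convex ℝ V)
    (ψ : EuclideanSpace ℝ (Fin d) → ℝ)
    (Dψ : EuclideanSpace ℝ (Fin d) → EuclideanSpace ℝ (Fin d))
    (hgrad : ∀ x, HasGradientAt ψ (Dψ x) x)
    (T : ℕ)
    (ℓ : ℕ → EuclideanSpace ℝ (Fin d) → ℝ)
    (η : ℕ → ℝ)
    (x : ℕ → EuclideanSpace ℝ (Fin d))
    (hconv : ∀ t ∈ Icc 1 T, ConvexOn ℝ Set.univ (ℓ t))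
    (hη : ∀ t ∈ Icc 1 T, 0 < η t)
    (hmem : ∀ t ∈ Icc 1 T, x (t + 1) ∈ V)
    (hmin : ∀ t ∈ Icc 1 T, ∀ y ∈ V,
      breg ψ Dψ (x (t + 1)) (x t) + η t * ℓ t (x (t + 1)) ≤ breg ψ Dψ y (x t) + η t * ℓ t y) :
    ∀ u ∈ V,
      ∑ t ∈ Icc 1 T, (ℓ t (x t) - ℓ t u) ≤
        ∑ t ∈ Icc 1 T, (breg ψ Dψ u (x t) - breg ψ Dψ u (x (t + 1))) / η t +
          ∑ t ∈ Icc 1 T, (ℓ t (x t) - ℓ t (x (t + 1)) - breg ψ Dψ (x (t + 1)) (x t) / η t) := by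
  intro u hu
  rw [← sum_add_distrib]
  refine sum_le_sum fun t ht => ?_
  have hstep := mul_sub_le_breg_of_isMinOn hVcv ((hconv t ht).subset (Set.subset_univ V) hVcv)
    (hη t ht).le (hmem t ht) hu (hgrad _) (isMinOn_iff.2 (hmin t ht))
  have hstep' : ℓ t (x (t + 1)) - ℓ t u ≤
      (breg ψ Dψ u (x t) - breg ψ Dψ u (x (t + 1))) / η t - breg ψ Dψ (x (t + 1)) (x t) / η t := by
    rw [← sub_div, le_div_iff₀ (hη t ht)]
    linarith
  linarith

/-- Regret bound for Implicit OMD: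
`R_T(u) ≤ ∑ₜ [B(u,x_t) − B(u,x_{t+1})]/η_t + ∑ₜ [ℓ_t(x_t) − ℓ_t(x_{t+1}) − B(x_{t+1},x_t)/η_t]`. -/
theorem iomd_regret_bound {d : ℕ}
    (V : Set (EuclideanSpace ℝ (Fin d)))
    (hVne : V.Nonempty) (hVcl : IsClosed V) (hVcv : Convex ℝ V)
    (ψ : EuclideanSpace ℝ (Fin d) → ℝ)
    (Dψ : EuclideanSpace ℝ (Fin d) → EuclideanSpace ℝ (Fin d))
    (hψ : StrictConvexOn ℝ Set.univ ψ)
    (hgrad : ∀ x, HasGradientAt ψ (Dψ x) x)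
    (T : ℕ)
    (ℓ : ℕ → EuclideanSpace ℝ (Fin d) → ℝ)
    (η : ℕ → ℝ)
    (x : ℕ → EuclideanSpace ℝ (Fin d))
    (hx1 : x 1 ∈ V)
    (hconv : ∀ t ∈ Icc 1 T, ConvexOn ℝ Set.univ (ℓ t))
    (hη : ∀ t ∈ Icc 1 T, 0 < η t)
    (hmem : ∀ t ∈ Icc 1 T, x (t + 1) ∈ V)
    (hmin : ∀ t ∈ Icc 1 T, ∀ y ∈ V,
      breg ψ Dψ (x (t + 1)) (x t) + η t * ℓ t (x (t + 1)) ≤ breg ψ Dψ y (x t) + η t * ℓ t y) :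
    ∀ u ∈ V,
      ∑ t ∈ Icc 1 T, (ℓ t (x t) - ℓ t u) ≤
        ∑ t ∈ Icc 1 T, (breg ψ Dψ u (x t) - breg ψ Dψ u (x (t + 1))) / η t +
          ∑ t ∈ Icc 1 T, (ℓ t (x t) - ℓ t (x (t + 1)) - breg ψ Dψ (x (t + 1)) (x t) / η t) :=
  iomd_regret_bound_general V hVcv ψ Dψ hgrad T ℓ η x hconv hη hmem hmin
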